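/- arXiv:1901.05752 — 2 statements merged into one kernel-verified Lean document; each statement's English description precedes it below -/
import Mathlib

section
/- For the Euler-kernel approximation problem under the normalized error criterion, the problem is quasi-polynomially tractable for every nondecreasing sequence (r_k) of nonnegative integers, and the exponent of QPT is t* = 1/(r_1+1). -/
open Filter Real Set

/-- Information complexity: the number of multi-indices `(j₁,…,j_d) ∈ ℕ^d`
(here 0-indexed, so `Λ k j` stands for `λ(k+1, j+1)`) whose eigenvalue product exceeds `ε²`. -/
noncomputable def infoCount (Λ : ℕ → ℕ → ℝ) (d : ℕ) (ε : ℝ) : ℕ :=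
  Nat.card {j : Fin d → ℕ | ε ^ 2 < ∏ k : Fin d, Λ k.val (j k)}

/-- Strong polynomial tractability. -/
def IsSPT (Λ : ℕ → ℕ → ℝ) : Prop :=
  ∃ C p : ℝ, 0 ≤ C ∧ 0 ≤ p ∧ ∀ d : ℕ, 1 ≤ d → ∀ ε : ℝ, ε ∈ Set.Ioo (0 : ℝ) 1 →
    (infoCount Λ d ε : ℝ) ≤ C * ε ^ (-p)

/-- The exponent `p*` of strong polynomial tractability. -/
noncomputable def sptExponent (Λ : ℕ → ℕ → ℝ) : ℝ :=
  sInf {p : ℝ | 0 ≤ p ∧ ∃ C : ℝ, 0 ≤ C ∧ ∀ d : ℕ, 1 ≤ d → ∀ ε : ℝ, ε ∈ Set.Ioo (0 : ℝ) 1 →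
    (infoCount Λ d ε : ℝ) ≤ C * ε ^ (-p)}

/-- Polynomial tractability. -/
def IsPT (Λ : ℕ → ℕ → ℝ) : Prop :=
  ∃ C p q : ℝ, 0 ≤ C ∧ 0 ≤ p ∧ 0 ≤ q ∧ ∀ d : ℕ, 1 ≤ d → ∀ ε : ℝ, ε ∈ Set.Ioo (0 : ℝ) 1 →
    (infoCount Λ d ε : ℝ) ≤ C * (d : ℝ) ^ q * ε ^ (-p)

/-- Quasi-polynomial tractability. -/
def IsQPT (Λ : ℕ → ℕ → ℝ) : Prop :=
  ∃ C t : ℝ, 0 < C ∧ 0 < t ∧ ∀ d : ℕ, 1 ≤ d → ∀ ε : ℝ, ε ∈ Set.Ioo (0 : ℝ) 1 →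
    (infoCount Λ d ε : ℝ) ≤ C * Real.exp (t * (1 + Real.log d) * (1 + Real.log ε⁻¹))

/-- The exponent `t*` of quasi-polynomial tractability. -/
noncomputable def qptExponent (Λ : ℕ → ℕ → ℝ) : ℝ :=
  sInf {t : ℝ | 0 < t ∧ ∃ C : ℝ, 0 < C ∧ ∀ d : ℕ, 1 ≤ d → ∀ ε : ℝ, ε ∈ Set.Ioo (0 : ℝ) 1 →
    (infoCount Λ d ε : ℝ) ≤ C * Real.exp (t * (1 + Real.log d) * (1 + Real.log ε⁻¹))}

/-- The filter describing `ε⁻¹ + d → ∞` over pairs `(ε, d)` with `ε ∈ (0,1)` and `d ≥ 1`. -/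
noncomputable def wtFilter : Filter (ℝ × ℕ) :=
  (Filter.comap (fun p : ℝ × ℕ => p.1⁻¹ + (p.2 : ℝ)) Filter.atTop) ⊓
    Filter.principal {p : ℝ × ℕ | p.1 ∈ Set.Ioo (0 : ℝ) 1 ∧ 1 ≤ p.2}

/-- `(s,t)`-weak tractability: `ln n(ε,d) / (ε^{-s} + d^t) → 0` as `ε⁻¹ + d → ∞`. -/
def IsWT (Λ : ℕ → ℕ → ℝ) (s t : ℝ) : Prop :=
  Filter.Tendsto
    (fun p : ℝ × ℕ => Real.log (infoCount Λ p.2 p.1) / (p.1 ^ (-s) + (p.2 : ℝ) ^ t))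
    wtFilter (nhds 0)

/-- Uniform weak tractability. -/
def IsUWT (Λ : ℕ → ℕ → ℝ) : Prop := ∀ s t : ℝ, 0 < s → 0 < t → IsWT Λ s t

/-- The problem suffers from the curse of dimensionality. -/
def SuffersCurse (Λ : ℕ → ℕ → ℝ) : Prop :=
  ∃ C ε₀ α : ℝ, 0 < C ∧ 0 < ε₀ ∧ 0 < α ∧ ∀ ε : ℝ, 0 < ε → ε ≤ ε₀ →
    {d : ℕ | C * (1 + α) ^ d ≤ (infoCount Λ d ε : ℝ)}.Infinite

/-- Condition (3) of Property (P) for a given `τ > 0`: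
`H(k,τ) = ∑_{j≥2} (λ(k,j)/λ(k,2))^τ` is finite for each `k` and
`sup_k H(k,τ) = H(1,τ)` (equivalently `H(k,τ) ≤ H(1,τ)` for all `k`). -/
def Cond3 (Λ : ℕ → ℕ → ℝ) (τ : ℝ) : Prop :=
  0 < τ ∧ (∀ k, Summable fun j : ℕ => (Λ k (j + 1) / Λ k 1) ^ τ) ∧
    ∀ k, (∑' j : ℕ, (Λ k (j + 1) / Λ k 1) ^ τ) ≤ ∑' j : ℕ, (Λ 0 (j + 1) / Λ 0 1) ^ τ

/-- `τ₀`: the infimum of all `τ` satisfying Condition (3). -/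
noncomputable def tau0 (Λ : ℕ → ℕ → ℝ) : ℝ := sInf {τ : ℝ | Cond3 Λ τ}

/-- Property (P): each sequence `λ(k,·)` is nonincreasing and nonnegative with `λ(k,1) = 1`
and `λ(k,2) > 0`, `h_k = λ(k,2)` is nonincreasing, and Condition (3) holds for some `τ > 0`. -/
structure PropertyP (Λ : ℕ → ℕ → ℝ) : Prop where
  nonneg : ∀ k j, 0 ≤ Λ k j
  anti : ∀ k, Antitone (Λ k)
  first : ∀ k, Λ k 0 = 1
  second_pos : ∀ k, 0 < Λ k 1
  h_anti : Antitone fun k => Λ k 1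
  cond3 : ∃ τ : ℝ, Cond3 Λ τ


/-- Normalized eigenvalues of the Euler-kernel problem: `λ(k,j)/λ(k,1) = (2j-1)^{-(2r_k+2)}`
(0-indexed: `eulerLam r k j = (2(j+1)-1)^{-(2 r_{k+1} + 2)}`). -/
noncomputable def eulerLam (r : ℕ → ℕ) (k j : ℕ) : ℝ :=
  ((2 * (j : ℝ) + 1) ^ (2 * r k + 2))⁻¹

/-!
For every `τ > 0`, each counted multi-index satisfies `1 < ε^{-2τ} ∏ₖ λ(k,jₖ)^τ`, whence
`n(ε,d) ≤ ε^{-2τ} ∏ₖ ∑ⱼ λ(k,j)^τ`. Take `τ = t(1 + ln d)/2` with `α = t(r₁+1) > 1`. Since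
`r_k ≥ r₁`, the `k`-th factor is at most `∑ⱼ (2j-1)^{-α(1 + ln d)}`; for `j ≥ 2` the extra factor
`(2j-1)^{-α ln d} ≤ 3^{-ln d} ≤ 1/d` bounds it by `1 + S/d` with `S = ∑_{j≥2} (2j-1)^{-α}`, so the
product is at most `e^S` whatever `d` is.
Conversely, for `d = 1` every `j` with `2j-1 < ε^{-1/(r₁+1)}` is counted, which is incompatible
with the bound `C e^t ε^{-t}` once `t(r₁+1) < 1`.
-/

namespace EulerQPT

def infoSet (Λ : ℕ → ℕ → ℝ) (d : ℕ) (ε : ℝ) : Set (Fin d → ℕ) :=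
  {j | ε ^ 2 < ∏ k : Fin d, Λ k.val (j k)}

def QPTBound (Λ : ℕ → ℕ → ℝ) (t C : ℝ) : Prop :=
  ∀ d : ℕ, 1 ≤ d → ∀ ε : ℝ, ε ∈ Ioo (0 : ℝ) 1 →
    (infoCount Λ d ε : ℝ) ≤ C * exp (t * (1 + log d) * (1 + log ε⁻¹))

theorem isQPT_and_qptExponent_eq {Λ : ℕ → ℕ → ℝ} {t₀ : ℝ} (h₀ : 0 < t₀)
    (upper : ∀ t, t₀ < t → ∃ C, 0 < C ∧ QPTBound Λ t C)
    (lower : ∀ t C, QPTBound Λ t C → t₀ ≤ t) :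
    IsQPT Λ ∧ qptExponent Λ = t₀ := by
  obtain ⟨C, hC, hb⟩ := upper (t₀ + 1) (lt_add_one t₀)
  refine ⟨⟨C, t₀ + 1, hC, by linarith, hb⟩,
    csInf_eq_of_forall_ge_of_forall_gt_exists_lt ⟨t₀ + 1, by linarith, C, hC, hb⟩ ?_ ?_⟩
  · rintro t ⟨-, C, -, hb⟩
    exact lower t C hb
  · intro w hw
    obtain ⟨C, hC, hb⟩ := upper _ (left_lt_add_div_two.2 hw)
    exact ⟨_, ⟨h₀.trans (left_lt_add_div_two.2 hw), C, hC, hb⟩, add_div_two_lt_right.2 hw⟩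

theorem sum_prod_le_prod_tsum {ι κ : Type*} [Fintype ι] {g : ι → κ → ℝ}
    (hg : ∀ k j, 0 ≤ g k j) (hs : ∀ k, Summable (g k)) (F : Finset (ι → κ)) :
    ∑ j ∈ F, ∏ k, g k (j k) ≤ ∏ k, ∑' i, g k i := by
  classical
  calc ∑ j ∈ F, ∏ k, g k (j k)
      ≤ ∑ j ∈ Fintype.piFinset fun k => F.image (· k), ∏ k, g k (j k) :=
        Finset.sum_le_sum_of_subset_of_nonneg
          (fun _ hj => Fintype.mem_piFinset.2 fun _ => Finset.mem_image_of_mem _ hj)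
          (fun _ _ _ => Finset.prod_nonneg fun _ _ => hg _ _)
    _ = ∏ k, ∑ i ∈ F.image (· k), g k i := (Finset.prod_univ_sum _ _).symm
    _ ≤ ∏ k, ∑' i, g k i :=
        Finset.prod_le_prod (fun k _ => Finset.sum_nonneg fun _ _ => hg k _)
          fun k _ => (hs k).sum_le_tsum _ fun i _ => hg k i

section Chebyshev

variable {Λ : ℕ → ℕ → ℝ} {τ ε : ℝ} {d : ℕ}

theorem one_le_rpow_mul_prod_rpow_of_mem_infoSet (hΛ : ∀ k j, 0 ≤ Λ k j) (hτ : 0 ≤ τ)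
    (hε : 0 < ε) {j : Fin d → ℕ} (hj : j ∈ infoSet Λ d ε) :
    1 ≤ ε⁻¹ ^ (2 * τ) * ∏ k : Fin d, Λ k (j k) ^ τ := by
  have hε' : ε⁻¹ ^ (2 * τ) = ((ε ^ 2)⁻¹) ^ τ := by
    rw [rpow_mul (by positivity), rpow_two, inv_pow]
  rw [hε', Real.finsetProd_rpow _ _ (fun k _ => hΛ _ _), ← mul_rpow (by positivity)
    (Finset.prod_nonneg fun k _ => hΛ _ _)]
  exact one_le_rpow ((one_le_inv_mul₀ (by positivity)).2 (le_of_lt hj)) hτ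

theorem card_le_of_subset_infoSet (hΛ : ∀ k j, 0 ≤ Λ k j) (hτ : 0 ≤ τ)
    (hs : ∀ k, Summable fun j => Λ k j ^ τ) (hε : 0 < ε) {F : Finset (Fin d → ℕ)} (hF : ↑F ⊆ infoSet Λ d ε) :
    (F.card : ℝ) ≤ ε⁻¹ ^ (2 * τ) * ∏ k : Fin d, ∑' j, Λ k j ^ τ := by
  calc (F.card : ℝ) = ∑ _j ∈ F, (1 : ℝ) := by simp
    _ ≤ ∑ j ∈ F, ε⁻¹ ^ (2 * τ) * ∏ k : Fin d, Λ k (j k) ^ τ :=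
        Finset.sum_le_sum fun j hj => one_le_rpow_mul_prod_rpow_of_mem_infoSet hΛ hτ hε (hF hj)
    _ = ε⁻¹ ^ (2 * τ) * ∑ j ∈ F, ∏ k : Fin d, Λ k (j k) ^ τ := (Finset.mul_sum _ _ _).symm
    _ ≤ _ := mul_le_mul_of_nonneg_left
        (sum_prod_le_prod_tsum (g := fun (k : Fin d) j => Λ k j ^ τ)
          (fun _ _ => rpow_nonneg (hΛ _ _) _) (fun k => hs k) F)
        (by positivity)

theorem infoSet_finite (hΛ : ∀ k j, 0 ≤ Λ k j) (hτ : 0 ≤ τ)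
    (hs : ∀ k, Summable fun j => Λ k j ^ τ) (hε : 0 < ε) : (infoSet Λ d ε).Finite := by
  by_contra h
  set B := ε⁻¹ ^ (2 * τ) * ∏ k : Fin d, ∑' j, Λ k j ^ τ
  obtain ⟨F, hF, hcard⟩ := Set.Infinite.exists_subset_card_eq h (⌊B⌋₊ + 1)
  have hFB := card_le_of_subset_infoSet hΛ hτ hs hε hF
  rw [hcard, Nat.cast_add_one] at hFB
  linarith [Nat.lt_floor_add_one B]

theorem infoCount_le_rpow_mul_prod_tsum (hΛ : ∀ k j, 0 ≤ Λ k j) (hτ : 0 ≤ τ)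
    (hs : ∀ k, Summable fun j => Λ k j ^ τ) (hε : 0 < ε) :
    (infoCount Λ d ε : ℝ) ≤ ε⁻¹ ^ (2 * τ) * ∏ k : Fin d, ∑' j, Λ k j ^ τ := by
  have hfin := infoSet_finite hΛ hτ hs hε (d := d)
  rw [infoCount, ← infoSet, Nat.card_eq_card_finite_toFinset hfin]
  exact card_le_of_subset_infoSet hΛ hτ hs hε (by simp)

end Chebyshev

theorem add_one_le_infoCount_one {Λ : ℕ → ℕ → ℝ} {ε : ℝ} (hfin : (infoSet Λ 1 ε).Finite)
    {n : ℕ} (hn : ∀ j ≤ n, ε ^ 2 < Λ 0 j) : n + 1 ≤ infoCount Λ 1 ε := by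
  have := hfin.to_subtype
  let f : Fin (n + 1) → infoSet Λ 1 ε := fun i =>
    ⟨fun _ => i, by simpa [infoSet] using hn i (Nat.lt_succ_iff.1 i.2)⟩
  have hf : Function.Injective f := fun i i' h => Fin.ext (congrFun (congrArg Subtype.val h) 0)
  calc n + 1 = Nat.card (Fin (n + 1)) := (Nat.card_fin _).symm
    _ ≤ Nat.card (infoSet Λ 1 ε) := Nat.card_le_card_of_injective f hf
    _ = infoCount Λ 1 ε := rfl

theorem one_le_of_forall_le_mul_rpow {K β : ℝ} (h : ∀ n : ℕ, (n : ℝ) + 1 ≤ K * ((n : ℝ) + 1) ^ β) :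
    1 ≤ β := by
  by_contra! hβ
  have hgrow : Tendsto (fun n : ℕ => ((n : ℝ) + 1) ^ (1 - β)) atTop atTop :=
    (tendsto_rpow_atTop (by linarith)).comp
      (tendsto_atTop_add_const_right _ 1 tendsto_natCast_atTop_atTop)
  obtain ⟨n, hn⟩ := (hgrow.eventually (eventually_gt_atTop K)).exists
  have hpos : (0 : ℝ) < (n : ℝ) + 1 := by positivity
  rw [rpow_sub hpos, rpow_one, lt_div_iff₀ (rpow_pos_of_pos hpos _)] at hn
  linarith [h n]

theorem summable_two_mul_add_one_rpow_neg {p : ℝ} (hp : 1 < p) :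
    Summable fun j : ℕ => (2 * j + 1 : ℝ) ^ (-p) := by
  have hshift : Summable fun j : ℕ => ((j : ℝ) + 1) ^ (-p) := by
    simpa using (summable_nat_add_iff 1).2 (summable_nat_rpow.2 (by linarith : -p < -1))
  refine hshift.of_nonneg_of_le (fun j => by positivity) fun j => ?_
  exact rpow_le_rpow_of_nonpos (by positivity) (by linarith [j.cast_nonneg (α := ℝ)])
    (by linarith)

theorem rpow_neg_mul_one_add_log_le {x α d : ℝ} (hx : 0 < x) (hαx : 1 ≤ α * log x)
    (hd : 1 ≤ d) : x ^ (-(α * (1 + log d))) ≤ x ^ (-α) / d := by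
  have hlogd : 0 ≤ log d := log_nonneg hd
  have hsplit : -(α * (1 + log d)) = -α + -(α * log d) := by ring
  rw [hsplit, rpow_add hx, div_eq_mul_inv]
  refine mul_le_mul_of_nonneg_left ?_ (by positivity)
  calc x ^ (-(α * log d)) = exp (log x * -(α * log d)) := rpow_def_of_pos hx _
    _ ≤ exp (-log d) := exp_le_exp.2 (by nlinarith [mul_le_mul_of_nonneg_right hαx hlogd])
    _ = d⁻¹ := by rw [exp_neg, exp_log (by linarith)]

theorem tsum_two_mul_add_one_rpow_neg_le {α d : ℝ} (hα : 1 < α) (hd : 1 ≤ d) :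
    ∑' j : ℕ, (2 * j + 1 : ℝ) ^ (-(α * (1 + log d))) ≤
      1 + (∑' j : ℕ, (2 * j + 3 : ℝ) ^ (-α)) / d := by
  have hlogd : 0 ≤ log d := log_nonneg hd
  have hs := summable_two_mul_add_one_rpow_neg (p := α * (1 + log d)) (by nlinarith)
  have htail : Summable fun j : ℕ => (2 * j + 3 : ℝ) ^ (-α) / d := by
    refine ((summable_nat_add_iff 1).2 (summable_two_mul_add_one_rpow_neg hα)).div_const d
      |>.congr fun j => ?_
    push_cast; ring_nf
  have hshift : ∑' j : ℕ, (2 * ((j + 1 : ℕ) : ℝ) + 1) ^ (-(α * (1 + log d))) ≤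
      ∑' j : ℕ, (2 * j + 3 : ℝ) ^ (-α) / d := by
    refine ((summable_nat_add_iff 1).2 hs).tsum_le_tsum (fun j => ?_) htail
    rw [show 2 * ((j + 1 : ℕ) : ℝ) + 1 = 2 * j + 3 by push_cast; ring]
    have hlog : 1 ≤ log (2 * j + 3 : ℝ) := by
      rw [le_log_iff_exp_le (by positivity)]
      linarith [exp_one_lt_d9, j.cast_nonneg (α := ℝ)]
    exact rpow_neg_mul_one_add_log_le (by positivity) (by nlinarith) hd
  rw [hs.tsum_eq_zero_add, ← tsum_div_const]
  simpa using hshift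

section Euler

variable (r : ℕ → ℕ)

theorem eulerLam_nonneg (k j : ℕ) : 0 ≤ eulerLam r k j := by
  unfold eulerLam
  positivity

theorem eulerLam_rpow_le {τ : ℝ} (hτ : 0 ≤ τ) {k m : ℕ} (hm : m ≤ r k) (j : ℕ) :
    eulerLam r k j ^ τ ≤ (2 * j + 1 : ℝ) ^ (-(2 * (m + 1) * τ)) := by
  have hbase : (1 : ℝ) ≤ 2 * j + 1 := by linarith [j.cast_nonneg (α := ℝ)]
  have hm' : (m : ℝ) ≤ r k := by exact_mod_cast hm
  rw [eulerLam, ← rpow_natCast, ← rpow_neg (by positivity), ← rpow_mul (by positivity)]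
  refine rpow_le_rpow_of_exponent_le hbase ?_
  push_cast
  nlinarith

theorem summable_eulerLam_rpow {τ : ℝ} {k m : ℕ} (hm : m ≤ r k) (hτ : 1 < 2 * (m + 1) * τ) :
    Summable fun j => eulerLam r k j ^ τ := by
  have hτ0 : 0 ≤ τ := by nlinarith
  exact (summable_two_mul_add_one_rpow_neg hτ).of_nonneg_of_le
    (fun j => rpow_nonneg (eulerLam_nonneg r k j) τ) (eulerLam_rpow_le r hτ0 hm)

theorem prod_tsum_eulerLam_rpow_le_exp (hr : Monotone r) {α τ : ℝ} (hα : 1 < α) {d : ℕ}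
    (hd : 1 ≤ d) (hτ : 2 * ((r 0 : ℝ) + 1) * τ = α * (1 + log d)) :
    ∏ k : Fin d, ∑' j, eulerLam r k j ^ τ ≤ exp (∑' j : ℕ, (2 * j + 3 : ℝ) ^ (-α)) := by
  set S := ∑' j : ℕ, (2 * j + 3 : ℝ) ^ (-α)
  have hS : 0 ≤ S := tsum_nonneg fun j => by positivity
  have hd' : (1 : ℝ) ≤ d := by exact_mod_cast hd
  have hτ1 : 1 < 2 * ((r 0 : ℝ) + 1) * τ := by rw [hτ]; nlinarith [log_nonneg hd']
  have hτ0 : 0 ≤ τ := by nlinarith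
  have hfactor (k : ℕ) : ∑' j, eulerLam r k j ^ τ ≤ 1 + S / d := by
    refine ((summable_eulerLam_rpow r (hr k.zero_le) hτ1).tsum_le_tsum
      (eulerLam_rpow_le r hτ0 (hr k.zero_le))
      (summable_two_mul_add_one_rpow_neg hτ1)).trans ?_
    rw [hτ]
    exact tsum_two_mul_add_one_rpow_neg_le hα hd'
  calc ∏ k : Fin d, ∑' j, eulerLam r k j ^ τ ≤ ∏ _k : Fin d, (1 + S / d) :=
        Finset.prod_le_prod (fun _ _ => tsum_nonneg fun _ => rpow_nonneg (eulerLam_nonneg r _ _) _)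
          fun k _ => hfactor k
    _ ≤ exp (S / d) ^ d := by
        rw [Finset.prod_const, Finset.card_univ, Fintype.card_fin]
        exact pow_le_pow_left₀ (by positivity) (by linarith [add_one_le_exp (S / d)]) d
    _ = exp S := by rw [← exp_nat_mul, mul_div_cancel₀ _ (by positivity)]

theorem eulerLam_qptBound (hr : Monotone r) {t : ℝ} (ht : 1 / ((r 0 : ℝ) + 1) < t) :
    ∃ C, 0 < C ∧ QPTBound (eulerLam r) t C := by
  have hα : 1 < t * ((r 0 : ℝ) + 1) := by
    rw [div_lt_iff₀ (by positivity)] at ht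
    linarith
  have ht0 : 0 < t := (by positivity : (0 : ℝ) < 1 / ((r 0 : ℝ) + 1)).trans ht
  set S := ∑' j : ℕ, (2 * j + 3 : ℝ) ^ (-(t * ((r 0 : ℝ) + 1)))
  refine ⟨exp S, exp_pos S, fun d hd ε ⟨hε0, hε1⟩ => ?_⟩
  have hlogd : 0 ≤ log d := log_nonneg (by exact_mod_cast hd)
  set τ := t * (1 + log d) / 2
  have hτ : 2 * ((r 0 : ℝ) + 1) * τ = t * ((r 0 : ℝ) + 1) * (1 + log d) := by ring
  have hτ1 : 1 < 2 * ((r 0 : ℝ) + 1) * τ := by rw [hτ]; nlinarith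
  have hεpow : ε⁻¹ ^ (2 * τ) ≤ exp (t * (1 + log d) * (1 + log ε⁻¹)) := by
    rw [rpow_def_of_pos (by positivity), show 2 * τ = t * (1 + log d) by ring]
    exact exp_le_exp.2 (by nlinarith)
  calc (infoCount (eulerLam r) d ε : ℝ)
      ≤ ε⁻¹ ^ (2 * τ) * ∏ k : Fin d, ∑' j, eulerLam r k j ^ τ :=
        infoCount_le_rpow_mul_prod_tsum (eulerLam_nonneg r) (by positivity)
          (fun k => summable_eulerLam_rpow r (hr k.zero_le) hτ1) hε0
    _ ≤ exp (t * (1 + log d) * (1 + log ε⁻¹)) * exp S :=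
        mul_le_mul hεpow (prod_tsum_eulerLam_rpow_le_exp r hr hα hd hτ)
          (Finset.prod_nonneg fun _ _ => tsum_nonneg fun _ => rpow_nonneg (eulerLam_nonneg r _ _) _)
          (by positivity)
    _ = exp S * exp (t * (1 + log d) * (1 + log ε⁻¹)) := mul_comm _ _

theorem le_of_eulerLam_qptBound {t C : ℝ} (hb : QPTBound (eulerLam r) t C) :
    1 / ((r 0 : ℝ) + 1) ≤ t := by
  set β := t * ((r 0 : ℝ) + 1) with hβ_def
  rw [div_le_iff₀ (by positivity)]
  refine one_le_of_forall_le_mul_rpow (K := C * exp t * 2 ^ β) fun n => ?_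
  have hx : (1 : ℝ) < 2 * n + 2 := by linarith [n.cast_nonneg (α := ℝ)]
  set x : ℝ := 2 * n + 2 with hx_def
  set ε := (x ^ (r 0 + 1))⁻¹ with hε_def
  have hε : ε ∈ Ioo (0 : ℝ) 1 := ⟨by positivity, inv_lt_one_of_one_lt₀ (one_lt_pow₀ hx (by omega))⟩
  have hfin : (infoSet (eulerLam r) 1 ε).Finite :=
    infoSet_finite (eulerLam_nonneg r) zero_le_one
      (fun k => summable_eulerLam_rpow r (Nat.zero_le _) (by norm_num)) hε.1
  have hcount : n + 1 ≤ infoCount (eulerLam r) 1 ε := by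
    refine add_one_le_infoCount_one hfin fun j hj => ?_
    rw [eulerLam, hε_def, inv_pow, ← pow_mul, show (r 0 + 1) * 2 = 2 * r 0 + 2 by ring]
    refine inv_strictAnti₀ (by positivity) (pow_lt_pow_left₀ ?_ (by positivity) (by omega))
    have : (j : ℝ) ≤ n := by exact_mod_cast hj
    linarith
  have hlogε : log ε⁻¹ = ((r 0 : ℝ) + 1) * log x := by
    rw [hε_def, inv_inv, log_pow]
    push_cast
    ring
  have hxβ : x ^ β = 2 ^ β * ((n : ℝ) + 1) ^ β := by
    rw [← mul_rpow (by norm_num) (by positivity), hx_def]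
    ring_nf
  calc (n : ℝ) + 1 ≤ infoCount (eulerLam r) 1 ε := by exact_mod_cast hcount
    _ ≤ C * exp (t * (1 + log (1 : ℕ)) * (1 + log ε⁻¹)) := hb 1 le_rfl ε hε
    _ = C * exp t * x ^ β := by
        rw [Nat.cast_one, log_one, add_zero, mul_one, hlogε, rpow_def_of_pos (by positivity),
          mul_assoc, ← exp_add, hβ_def]
        ring_nf
    _ = C * exp t * 2 ^ β * ((n : ℝ) + 1) ^ β := by rw [hxβ]; ring

end Euler

end EulerQPT

/-- Euler kernels, normalized error criterion: QPT holds for every nondecreasing sequence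
`(r_k)`, with exponent of QPT equal to `1/(r₁+1)`. -/
theorem euler_qpt (r : ℕ → ℕ) (hr : Monotone r) :
    IsQPT (eulerLam r) ∧ qptExponent (eulerLam r) = 1 / ((r 0 : ℝ) + 1) :=
  EulerQPT.isQPT_and_qptExponent_eq (by positivity) (fun _ => EulerQPT.eulerLam_qptBound r hr)
    (fun _ _ => EulerQPT.le_of_eulerLam_qptBound r)
end

section
/- For the analytic-Korobov-kernel approximation problem, the problem is strongly polynomially tractable if and only if liminf_{k→∞} a_k/ln k > 0, and in that case the exponent of SPT is p* = 2/A_* with A_* = ln(ω^{-1}) · liminf_{k→∞} a_k/ln k. -/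
open Filter Real Set

/-- Eigenvalues of the analytic-Korobov-kernel problem: `λ(k,1) = 1` and
`λ(k,2j) = λ(k,2j+1) = ω^{a_k j^{b_k}}` for `j ≥ 1`
(0-indexed in both variables: `akorobovLam ω a b k j = λ(k+1, j+1)`). -/
noncomputable def akorobovLam (ω : ℝ) (a b : ℕ → ℝ) (k j : ℕ) : ℝ :=
  if j = 0 then 1 else ω ^ (a k * (((j + 1) / 2 : ℕ) : ℝ) ^ (b k))

/-!
Write `L = ln ω⁻¹` and `ℓ = liminf a_k / ln k`. Since all eigenvalues lie in `[0, 1]`, a product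
exceeds `ε²` only if every factor does, so the counted set is finite, and Markov's inequality gives
`n(ε,d) ε^{2τ} ≤ ∏_k ∑_j λ(k,j)^τ`. Because `a_k ≥ a_1` and `b_k ≥ b_*`, the tail
`∑_{j≥2} λ(k,j)^τ` is at most a constant times `ω^{τ a_k}`, so the product is bounded uniformly
in `d` once `∑_k ω^{τ a_k} < ∞`, which holds when `τ L α > 1` for some `α < ℓ`: every `p > 2/(Lℓ)`
is an exponent of SPT. Conversely, the `2d` multi-indices with a single entry in `{2, 3}` are all
counted once `ε² < ω^{a_d}`; taking `ε` just below `ω^{a_d/2}`, the bound `n ≤ C ε^{-p}` forces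
`ln d ≤ B + (pL/2) a_d`, hence `ℓ ≥ 2/(pL)`.
-/

def infoSet (Λ : ℕ → ℕ → ℝ) (d : ℕ) (ε : ℝ) : Set (Fin d → ℕ) :=
  {j | ε ^ 2 < ∏ k : Fin d, Λ k (j k)}

def HasSPTBound (Λ : ℕ → ℕ → ℝ) (p : ℝ) : Prop :=
  ∃ C : ℝ, 0 ≤ C ∧ ∀ d : ℕ, 1 ≤ d → ∀ ε : ℝ, ε ∈ Set.Ioo (0 : ℝ) 1 →
    (infoCount Λ d ε : ℝ) ≤ C * ε ^ (-p)

section General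

variable {Λ : ℕ → ℕ → ℝ}

theorem infoCount_eq_card (d : ℕ) (ε : ℝ) : infoCount Λ d ε = Nat.card (infoSet Λ d ε) := rfl

theorem isSPT_iff_nonempty : IsSPT Λ ↔ {p : ℝ | 0 ≤ p ∧ HasSPTBound Λ p}.Nonempty :=
  ⟨fun ⟨C, p, hC, hp, h⟩ => ⟨p, hp, C, hC, h⟩, fun ⟨p, hp, C, hC, h⟩ => ⟨C, p, hC, hp, h⟩⟩

theorem sptExponent_eq_sInf : sptExponent Λ = sInf {p : ℝ | 0 ≤ p ∧ HasSPTBound Λ p} := rfl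

theorem prod_le_apply (h0 : ∀ k j, 0 ≤ Λ k j) (h1 : ∀ k j, Λ k j ≤ 1) {d : ℕ}
    (j : Fin d → ℕ) (k : Fin d) : ∏ i : Fin d, Λ i (j i) ≤ Λ k (j k) := by
  rw [← Finset.mul_prod_erase _ _ (Finset.mem_univ k)]
  exact mul_le_of_le_one_right (h0 _ _)
    (Finset.prod_le_one (fun i _ => h0 _ _) fun i _ => h1 _ _)

theorem infoSet_finite (h0 : ∀ k j, 0 ≤ Λ k j) (h1 : ∀ k j, Λ k j ≤ 1) {τ : ℝ} (hτ : 0 < τ)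
    (hsum : ∀ k, Summable fun j => Λ k j ^ τ) (d : ℕ) {ε : ℝ} (hε : 0 < ε) :
    (infoSet Λ d ε).Finite := by
  have hcoord : ∀ k, {j | ε ^ 2 < Λ k j}.Finite := fun k => by
    have hsmall := (hsum k).tendsto_cofinite_zero.eventually
      (gt_mem_nhds (by positivity : 0 < (ε ^ 2) ^ τ))
    exact (eventually_cofinite.mp hsmall).subset fun j hj =>
      not_lt.mpr (rpow_le_rpow (by positivity) (le_of_lt hj) hτ.le)
  exact (Set.Finite.pi fun k : Fin d => hcoord k).subset fun j hj k _ =>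
    lt_of_lt_of_le hj (prod_le_apply h0 h1 j k)

theorem infoCount_mul_rpow_le (h0 : ∀ k j, 0 ≤ Λ k j) {τ : ℝ} (hτ : 0 ≤ τ)
    (hsum : ∀ k, Summable fun j => Λ k j ^ τ) {d : ℕ} {ε : ℝ} (hfin : (infoSet Λ d ε).Finite) :
    (infoCount Λ d ε : ℝ) * (ε ^ 2) ^ τ ≤ ∏ k : Fin d, ∑' j, Λ k j ^ τ := by
  classical
  set T := hfin.toFinset
  set t : ∀ _ : Fin d, Finset ℕ := fun k => T.image fun j => j k
  have hT : T ⊆ Fintype.piFinset t := fun j hj =>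
    Fintype.mem_piFinset.mpr fun k => Finset.mem_image_of_mem _ hj
  have hnonneg : ∀ k j, 0 ≤ Λ k j ^ τ := fun k j => rpow_nonneg (h0 k j) τ
  calc (infoCount Λ d ε : ℝ) * (ε ^ 2) ^ τ = ∑ _j ∈ T, (ε ^ 2) ^ τ := by
        rw [infoCount_eq_card, Nat.card_eq_card_finite_toFinset hfin, Finset.sum_const,
          nsmul_eq_mul]
    _ ≤ ∑ j ∈ T, ∏ k : Fin d, Λ k (j k) ^ τ := Finset.sum_le_sum fun j hj => by
        rw [finsetProd_rpow _ _ (fun k _ => h0 _ _)]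
        exact rpow_le_rpow (by positivity) (le_of_lt (hfin.mem_toFinset.mp hj)) hτ
    _ ≤ ∑ j ∈ Fintype.piFinset t, ∏ k : Fin d, Λ k (j k) ^ τ :=
        Finset.sum_le_sum_of_subset_of_nonneg hT fun j _ _ =>
          Finset.prod_nonneg fun k _ => hnonneg _ _
    _ = ∏ k : Fin d, ∑ j ∈ t k, Λ k j ^ τ := (Finset.prod_univ_sum t fun k j => Λ k j ^ τ).symm
    _ ≤ ∏ k : Fin d, ∑' j, Λ k j ^ τ :=
        Finset.prod_le_prod (fun k _ => Finset.sum_nonneg fun j _ => hnonneg _ _)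
          fun k _ => (hsum k).sum_le_tsum _ fun j _ => hnonneg _ _

theorem hasSPTBound_of_tsum_le (h0 : ∀ k j, 0 ≤ Λ k j) (h1 : ∀ k j, Λ k j ≤ 1) {τ : ℝ}
    (hτ : 0 < τ) (hsum : ∀ k, Summable fun j => Λ k j ^ τ) {g : ℕ → ℝ} (hg0 : ∀ k, 0 ≤ g k)
    (hg : Summable g) (hle : ∀ k, ∑' j, Λ k j ^ τ ≤ 1 + g k) : HasSPTBound Λ (2 * τ) := by
  refine ⟨exp (∑' k, g k), (exp_pos _).le, fun d _ ε hε => ?_⟩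
  have hprod : ∏ k : Fin d, ∑' j, Λ k j ^ τ ≤ exp (∑' k, g k) := calc
    ∏ k : Fin d, ∑' j, Λ k j ^ τ ≤ ∏ k : Fin d, (1 + g k) :=
        Finset.prod_le_prod (fun k _ => tsum_nonneg fun j => rpow_nonneg (h0 _ _) _)
          fun k _ => hle k
    _ ≤ exp (∑ k : Fin d, g k) := prod_one_add_le_exp_sum _ fun k => hg0 k
    _ ≤ exp (∑' k, g k) := exp_le_exp.mpr <|
        (Fin.sum_univ_eq_sum_range g d).trans_le (hg.sum_le_tsum _ fun k _ => hg0 k)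
  have hcount := (infoCount_mul_rpow_le h0 hτ.le hsum
    (infoSet_finite h0 h1 hτ hsum d hε.1)).trans hprod
  have hετ : (ε ^ 2) ^ τ = ε ^ (2 * τ) := by
    rw [← rpow_natCast, ← rpow_mul hε.1.le, Nat.cast_ofNat]
  rw [hετ, ← le_div_iff₀ (rpow_pos_of_pos hε.1 _), div_eq_mul_inv, ← rpow_neg hε.1.le] at hcount
  exact hcount

theorem mul_le_infoCount (h0 : ∀ k, Λ k 0 = 1) {d m : ℕ} {ε : ℝ} (hfin : (infoSet Λ d ε).Finite)
    (h : ∀ (k : Fin d) (i : Fin m), ε ^ 2 < Λ k (i + 1)) : m * d ≤ infoCount Λ d ε := by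
  classical
  have := hfin.to_subtype
  have hmem : ∀ q : Fin d × Fin m, (Pi.single q.1 (q.2.val + 1) : Fin d → ℕ) ∈ infoSet Λ d ε := by
    rintro ⟨k, i⟩
    show ε ^ 2 < ∏ k' : Fin d, Λ k' ((Pi.single k (i.val + 1) : Fin d → ℕ) k')
    rw [Fintype.prod_eq_single k fun k' hk' => by rw [Pi.single_eq_of_ne hk', h0],
      Pi.single_eq_same]
    exact h k i
  have hinj : Function.Injective fun q : Fin d × Fin m => (⟨_, hmem q⟩ : infoSet Λ d ε) := by
    rintro ⟨k, i⟩ ⟨k', i'⟩ hq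
    have hq : (Pi.single k (i.val + 1) : Fin d → ℕ) = Pi.single k' (i'.val + 1) :=
      congrArg Subtype.val hq
    obtain rfl : k = k' := by
      by_contra hne
      simpa [Pi.single_eq_of_ne hne] using congrFun hq k
    simpa [Fin.ext_iff] using congrFun hq k
  calc m * d = Nat.card (Fin d × Fin m) := by simp [mul_comm]
    _ ≤ Nat.card (infoSet Λ d ε) := Nat.card_le_card_of_injective _ hinj

end General

theorem csInf_eq_of_Ioi_subset_of_subset_Ici {α : Type*} [ConditionallyCompleteLinearOrder α]
    [NoMaxOrder α] [DenselyOrdered α] {S : Set α} {x : α} (h₁ : Ioi x ⊆ S) (h₂ : S ⊆ Ici x) :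
    sInf S = x :=
  le_antisymm (csInf_Ioi (a := x) ▸ csInf_le_csInf ⟨x, h₂⟩ nonempty_Ioi h₁)
    (le_csInf (nonempty_Ioi.mono h₁) h₂)

section Threshold

variable {S : Set ℝ} {ℓ : EReal} {c : ℝ}

theorem Ioi_div_toReal_subset (hc : 0 < c) (hℓ : 0 < ℓ)
    (hmem : ∀ q, 0 < q → ((c / q : ℝ) : EReal) < ℓ → q ∈ S) : Ioi (c / ℓ.toReal) ⊆ S := by
  induction ℓ using EReal.rec with
  | bot => exact absurd hℓ (not_lt.mpr bot_le)
  | coe r =>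
    have hr : 0 < r := EReal.coe_pos.mp hℓ
    intro q hq
    have hq0 : 0 < q := (div_pos hc hr).trans hq
    exact hmem q hq0 (EReal.coe_lt_coe_iff.mpr ((div_lt_comm₀ hr hq0).mp hq))
  | top => exact fun q hq => hmem q (by simpa using hq) (EReal.coe_lt_top _)

theorem subset_Ici_div_toReal (hc : 0 < c)
    (hle : ∀ p ∈ S, 0 < p ∧ ((c / p : ℝ) : EReal) ≤ ℓ) : S ⊆ Ici (c / ℓ.toReal) := by
  intro p hp
  obtain ⟨hp0, hcp⟩ := hle p hp
  induction ℓ using EReal.rec with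
  | bot => exact absurd hcp (not_le.mpr (EReal.bot_lt_coe _))
  | coe r =>
    have hcr := EReal.coe_le_coe_iff.mp hcp
    exact (div_le_comm₀ hp0 ((div_pos hc hp0).trans_le hcr)).mp hcr
  | top => simpa using hp0.le

/-- For `ℓ = ⊤` the infimum is `c / 0 = 0`. -/
theorem nonempty_iff_and_sInf_eq (hc : 0 < c)
    (hmem : ∀ q, 0 < q → ((c / q : ℝ) : EReal) < ℓ → q ∈ S)
    (hle : ∀ p ∈ S, 0 < p ∧ ((c / p : ℝ) : EReal) ≤ ℓ) :
    (S.Nonempty ↔ 0 < ℓ) ∧ (0 < ℓ → sInf S = c / ℓ.toReal) := by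
  refine ⟨⟨fun ⟨p, hp⟩ => ?_, fun hℓ => ?_⟩, fun hℓ => ?_⟩
  · obtain ⟨hp0, hcp⟩ := hle p hp
    exact (EReal.coe_pos.mpr (div_pos hc hp0)).trans_le hcp
  · exact nonempty_Ioi.mono (Ioi_div_toReal_subset hc hℓ hmem)
  · exact csInf_eq_of_Ioi_subset_of_subset_Ici (Ioi_div_toReal_subset hc hℓ hmem)
      (subset_Ici_div_toReal hc hle)

end Threshold

theorem tendsto_log_natCast_add_one_atTop :
    Tendsto (fun k : ℕ => Real.log ((k : ℝ) + 1)) atTop atTop :=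
  tendsto_log_atTop.comp (tendsto_atTop_add_const_right _ 1 tendsto_natCast_atTop_atTop)

theorem eventually_mul_log_le_of_lt_liminf {f : ℕ → ℝ} {α : ℝ}
    (h : (α : EReal) < liminf (fun k : ℕ => (f k / Real.log ((k : ℝ) + 1) : EReal)) atTop) :
    ∀ᶠ k : ℕ in atTop, α * Real.log ((k : ℝ) + 1) ≤ f k := by
  filter_upwards [eventually_lt_of_lt_liminf h,
    tendsto_log_natCast_add_one_atTop.eventually_gt_atTop 0] with k hk hlog
  rw [← EReal.coe_div, EReal.coe_lt_coe_iff, lt_div_iff₀ hlog] at hk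
  exact hk.le

theorem le_liminf_div_log {f : ℕ → ℝ} {B s : ℝ} (hs : 0 < s)
    (h : ∀ᶠ k : ℕ in atTop, Real.log ((k : ℝ) + 1) ≤ B + s * f k) :
    ((1 / s : ℝ) : EReal) ≤ liminf (fun k : ℕ => (f k / Real.log ((k : ℝ) + 1) : EReal)) atTop := by
  have hlim : Tendsto (fun k : ℕ => ((1 / s - B / s * (Real.log ((k : ℝ) + 1))⁻¹ : ℝ) : EReal))
      atTop (nhds ((1 / s : ℝ) : EReal)) := by
    refine EReal.tendsto_coe.mpr ?_
    simpa using tendsto_const_nhds.sub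
      (tendsto_log_natCast_add_one_atTop.inv_tendsto_atTop.const_mul (B / s))
  rw [← hlim.liminf_eq]
  refine liminf_le_liminf ?_
  filter_upwards [h, tendsto_log_natCast_add_one_atTop.eventually_gt_atTop 0] with k hk hlog
  have hlhs : (1 / s - B / s * (Real.log ((k : ℝ) + 1))⁻¹) * Real.log ((k : ℝ) + 1)
      = (Real.log ((k : ℝ) + 1) - B) / s := by
    field_simp
  rw [← EReal.coe_div, EReal.coe_le_coe_iff, le_div_iff₀ hlog, hlhs, div_le_iff₀ hs]
  linarith

theorem HasSum.comp_div_two {M : Type*} [AddCommMonoid M] [TopologicalSpace M] [ContinuousAdd M]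
    {f : ℕ → M} {a : M} (hf : HasSum f a) : HasSum (fun j => f (j / 2)) (a + a) := by
  have hodd : ∀ k : ℕ, (2 * k + 1) / 2 = k := fun k => by omega
  exact HasSum.even_add_odd (by simpa using hf) (by simpa [hodd] using hf)

theorem summable_rpow_mul_rpow_natCast {ω c s : ℝ} (hω : ω ∈ Ioo 0 1) (hc : 0 < c)
    (hs : 0 < s) : Summable fun n : ℕ => ω ^ (c * (n : ℝ) ^ s) := by
  have hL : 0 < -Real.log ω * c := mul_pos (neg_pos.mpr (log_neg hω.1 hω.2)) hc
  have ho := (isLittleO_exp_neg_mul_rpow_atTop hL (-2 / s)).comp_tendsto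
    ((tendsto_rpow_atTop hs).comp tendsto_natCast_atTop_atTop)
  refine summable_of_isBigO_nat (summable_nat_rpow.mpr (by norm_num : (-2 : ℝ) < -1)) ?_
  refine (ho.isBigO.congr (fun n => ?_) fun n => ?_)
  · simp only [Function.comp_apply, rpow_def_of_pos hω.1]
    ring_nf
  · simp only [Function.comp_apply]
    rw [← rpow_mul (Nat.cast_nonneg n), mul_div_cancel₀ _ hs.ne']

theorem summable_rpow_mul_of_eventually_mul_log_le {ω τ α : ℝ} {a : ℕ → ℝ} (hω : ω ∈ Ioo 0 1)
    (hτ : 0 ≤ τ) (hr : 1 < τ * α * Real.log ω⁻¹)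
    (ha : ∀ᶠ k : ℕ in atTop, α * Real.log ((k : ℝ) + 1) ≤ a k) :
    Summable fun k => ω ^ (τ * a k) := by
  have hζ : Summable fun k : ℕ => (((k + 1 : ℕ) : ℝ)) ^ (-(τ * α * Real.log ω⁻¹)) :=
    (summable_nat_add_iff 1).mpr (summable_nat_rpow.mpr (neg_lt_neg hr))
  refine hζ.of_norm_bounded_eventually_nat ?_
  filter_upwards [ha] with k hk
  rw [norm_of_nonneg (rpow_nonneg hω.1.le _)]
  calc ω ^ (τ * a k) ≤ ω ^ (τ * (α * Real.log ((k : ℝ) + 1))) :=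
        rpow_le_rpow_of_exponent_ge hω.1 hω.2.le (mul_le_mul_of_nonneg_left hk hτ)
    _ = (((k + 1 : ℕ) : ℝ)) ^ (-(τ * α * Real.log ω⁻¹)) := by
        rw [rpow_def_of_pos hω.1, rpow_def_of_pos (by positivity), log_inv]
        push_cast
        ring_nf

theorem log_inv_pos_of_mem_Ioo {ω : ℝ} (hω : ω ∈ Ioo 0 1) : 0 < Real.log ω⁻¹ :=
  log_pos (one_lt_inv_iff₀.mpr hω)

section Korobov

variable {ω : ℝ} {a b : ℕ → ℝ}

theorem akorobovLam_zero (k : ℕ) : akorobovLam ω a b k 0 = 1 := rfl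

theorem akorobovLam_succ (k j : ℕ) :
    akorobovLam ω a b k (j + 1) = ω ^ (a k * ((j / 2 + 1 : ℕ) : ℝ) ^ b k) := by
  rw [akorobovLam, if_neg j.succ_ne_zero, show (j + 1 + 1) / 2 = j / 2 + 1 by omega]

theorem akorobovLam_succ_of_lt_two {i : ℕ} (hi : i < 2) (k : ℕ) :
    akorobovLam ω a b k (i + 1) = ω ^ a k := by
  rw [akorobovLam_succ, Nat.div_eq_of_lt hi]
  simp

theorem akorobovLam_nonneg (hω : 0 ≤ ω) (k j : ℕ) : 0 ≤ akorobovLam ω a b k j := by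
  unfold akorobovLam
  split_ifs
  exacts [zero_le_one, rpow_nonneg hω _]

theorem akorobovLam_le_one (hω₀ : 0 ≤ ω) (hω₁ : ω ≤ 1) (ha : ∀ k, 0 ≤ a k) (k j : ℕ) :
    akorobovLam ω a b k j ≤ 1 := by
  unfold akorobovLam
  split_ifs
  exacts [le_rfl, rpow_le_one hω₀ hω₁ (mul_nonneg (ha k) (rpow_nonneg (Nat.cast_nonneg _) _))]

/-- `a_k m^{b_k} ≥ a_k + a_1 (m^{b_*} - 1)` splits off a factor `ω^{τ a_k}` uniformly in `m`. -/
theorem rpow_akorobovLam_succ_le (hω : ω ∈ Ioo 0 1) (ha0 : 0 ≤ a 0) (hamono : Monotone a)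
    {s : ℝ} (hs : 0 ≤ s) (hb : ∀ k, s ≤ b k) {τ : ℝ} (hτ : 0 ≤ τ) (k j : ℕ) :
    akorobovLam ω a b k (j + 1) ^ τ
      ≤ ω ^ (τ * a k) * ω ^ (τ * a 0 * (((j / 2 + 1 : ℕ) : ℝ) ^ s - 1)) := by
  set M : ℝ := ((j / 2 + 1 : ℕ) : ℝ)
  have hM : 1 ≤ M := by simp [M]
  have hMs : 1 ≤ M ^ s := one_le_rpow hM hs
  have hMb : M ^ s ≤ M ^ b k := rpow_le_rpow_of_exponent_le hM (hb k)
  have hak : a 0 ≤ a k := hamono (Nat.zero_le k)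
  have hexp : a 0 * (M ^ s - 1) ≤ a k * (M ^ b k - 1) :=
    mul_le_mul hak (by linarith) (by linarith) (ha0.trans hak)
  rw [akorobovLam_succ, ← rpow_mul hω.1.le, ← rpow_add hω.1]
  refine rpow_le_rpow_of_exponent_ge hω.1 hω.2.le ?_
  nlinarith [mul_le_mul_of_nonneg_left hexp hτ]

theorem exists_tsum_rpow_akorobovLam_le (hω : ω ∈ Ioo 0 1) (ha0 : 0 < a 0)
    (hamono : Monotone a) {s : ℝ} (hs : 0 < s) (hb : ∀ k, s ≤ b k) {τ : ℝ} (hτ : 0 < τ) :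
    ∃ U : ℝ, 0 ≤ U ∧ ∀ k, (Summable fun j => akorobovLam ω a b k j ^ τ) ∧
      ∑' j, akorobovLam ω a b k j ^ τ ≤ 1 + U * ω ^ (τ * a k) := by
  set u : ℕ → ℝ := fun m => ω ^ (τ * a 0 * (((m + 1 : ℕ) : ℝ) ^ s - 1))
  have hu : Summable u := by
    refine ((summable_nat_add_iff 1).mpr (summable_rpow_mul_rpow_natCast hω (mul_pos hτ ha0) hs)
      |>.mul_left (ω ^ (-(τ * a 0)))).congr fun m => ?_
    rw [← rpow_add hω.1]
    congr 1
    ring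
  have hw : Summable fun j : ℕ => u (j / 2) := hu.hasSum.comp_div_two.summable
  have hu0 : ∀ m, 0 ≤ u m := fun m => rpow_nonneg hω.1.le _
  refine ⟨∑' j, u (j / 2), tsum_nonneg fun j => hu0 _, fun k => ?_⟩
  have hle := rpow_akorobovLam_succ_le hω ha0.le hamono hs.le hb hτ.le k
  have htail : Summable fun j => akorobovLam ω a b k (j + 1) ^ τ :=
    (hw.mul_left (ω ^ (τ * a k))).of_nonneg_of_le
      (fun j => rpow_nonneg (akorobovLam_nonneg hω.1.le _ _) _) hle
  have hsum := (summable_nat_add_iff (f := fun j => akorobovLam ω a b k j ^ τ) 1).mp htail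
  refine ⟨hsum, ?_⟩
  rw [hsum.tsum_eq_zero_add, akorobovLam_zero, one_rpow, mul_comm, ← tsum_mul_left]
  exact add_le_add le_rfl (htail.tsum_le_tsum hle (hw.mul_left _))

theorem infoSet_akorobovLam_finite (hω : ω ∈ Ioo 0 1) (ha0 : 0 < a 0) (hamono : Monotone a)
    {s : ℝ} (hs : 0 < s) (hb : ∀ k, s ≤ b k) (d : ℕ) {ε : ℝ} (hε : 0 < ε) :
    (infoSet (akorobovLam ω a b) d ε).Finite := by
  obtain ⟨_, -, hU⟩ := exists_tsum_rpow_akorobovLam_le hω ha0 hamono hs hb one_pos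
  exact infoSet_finite (akorobovLam_nonneg hω.1.le)
    (akorobovLam_le_one hω.1.le hω.2.le fun k => ha0.le.trans (hamono k.zero_le)) one_pos
    (fun k => (hU k).1) d hε

theorem hasSPTBound_akorobovLam_of_summable (hω : ω ∈ Ioo 0 1) (ha0 : 0 < a 0)
    (hamono : Monotone a) {s : ℝ} (hs : 0 < s) (hb : ∀ k, s ≤ b k) {τ : ℝ} (hτ : 0 < τ)
    (hv : Summable fun k => ω ^ (τ * a k)) : HasSPTBound (akorobovLam ω a b) (2 * τ) := by
  obtain ⟨U, hU0, hU⟩ := exists_tsum_rpow_akorobovLam_le hω ha0 hamono hs hb hτ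
  exact hasSPTBound_of_tsum_le (akorobovLam_nonneg hω.1.le)
    (akorobovLam_le_one hω.1.le hω.2.le fun k => ha0.le.trans (hamono k.zero_le)) hτ
    (fun k => (hU k).1) (fun k => mul_nonneg hU0 (rpow_nonneg hω.1.le _)) (hv.mul_left U)
    fun k => (hU k).2

theorem hasSPTBound_akorobovLam_of_div_lt_liminf (hω : ω ∈ Ioo 0 1) (ha0 : 0 < a 0)
    (hamono : Monotone a) {s : ℝ} (hs : 0 < s) (hb : ∀ k, s ≤ b k) {q : ℝ} (hq : 0 < q)
    (hlt : ((2 / Real.log ω⁻¹ / q : ℝ) : EReal)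
      < liminf (fun k : ℕ => (a k / Real.log ((k : ℝ) + 1) : EReal)) atTop) :
    HasSPTBound (akorobovLam ω a b) q := by
  obtain ⟨α, hα, hαℓ⟩ := EReal.exists_between_coe_real hlt
  have hL : 0 < Real.log ω⁻¹ := log_inv_pos_of_mem_Ioo hω
  have hr : 1 < q / 2 * α * Real.log ω⁻¹ := by
    rw [EReal.coe_lt_coe_iff, div_lt_iff₀ hq, div_lt_iff₀ hL] at hα
    linarith
  have h := hasSPTBound_akorobovLam_of_summable (b := b) hω ha0 hamono hs hb (half_pos hq)
    (summable_rpow_mul_of_eventually_mul_log_le hω (half_pos hq).le hr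
      (eventually_mul_log_le_of_lt_liminf hαℓ))
  rwa [mul_div_cancel₀ q two_ne_zero] at h

theorem two_mul_le_infoCount_akorobovLam (hω : ω ∈ Ioo 0 1) (ha0 : 0 < a 0)
    (hamono : Monotone a) {s : ℝ} (hs : 0 < s) (hb : ∀ k, s ≤ b k) (k : ℕ) {ε : ℝ}
    (hε : 0 < ε) (hsmall : ε ^ 2 < ω ^ a k) :
    2 * (k + 1) ≤ infoCount (akorobovLam ω a b) (k + 1) ε :=
  mul_le_infoCount akorobovLam_zero (infoSet_akorobovLam_finite hω ha0 hamono hs hb _ hε)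
    fun i j => by
      rw [akorobovLam_succ_of_lt_two j.2]
      exact hsmall.trans_le
        (rpow_le_rpow_of_exponent_ge hω.1 hω.2.le (hamono (Nat.lt_succ_iff.mp i.2)))

theorem exists_log_le_of_hasSPTBound (hω : ω ∈ Ioo 0 1) (ha0 : 0 < a 0)
    (hamono : Monotone a) {s : ℝ} (hs : 0 < s) (hb : ∀ k, s ≤ b k) {p : ℝ}
    (h : HasSPTBound (akorobovLam ω a b) p) :
    ∃ B : ℝ, ∀ k : ℕ, Real.log ((k : ℝ) + 1) ≤ B + p * Real.log ω⁻¹ / 2 * a k := by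
  obtain ⟨C, -, hC⟩ := h
  have hL : 0 < Real.log ω⁻¹ := log_inv_pos_of_mem_Ioo hω
  refine ⟨Real.log C + (p - 1) * Real.log 2, fun k => ?_⟩
  have hak : 0 < a k := ha0.trans_le (hamono k.zero_le)
  -- `ε = e^{-x}` lies just below `ω^{a_k/2}`, and `ε^{-p} = 2^p ω^{-p a_k/2}`.
  set x := Real.log ω⁻¹ * a k / 2 + Real.log 2
  have hx : 0 < x := by positivity
  have hε : exp (-x) ∈ Ioo 0 1 := ⟨exp_pos _, exp_lt_one_iff.mpr (neg_lt_zero.mpr hx)⟩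
  have hsmall : exp (-x) ^ 2 < ω ^ a k := by
    rw [← exp_nat_mul, rpow_def_of_pos hω.1, exp_lt_exp, ← neg_neg (Real.log ω), ← log_inv]
    have := log_pos (one_lt_two : (1 : ℝ) < 2)
    push_cast
    linarith [show 2 * -x = -(Real.log ω⁻¹ * a k) - 2 * Real.log 2 by ring]
  have hcount := (Nat.cast_le (α := ℝ)).mpr
    (two_mul_le_infoCount_akorobovLam (b := b) hω ha0 hamono hs hb k hε.1 hsmall)
  have hbound := hcount.trans (hC (k + 1) (Nat.le_add_left 1 k) _ hε)
  rw [← exp_mul, neg_mul_neg] at hbound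
  push_cast at hbound
  have hC0 : 0 < C := pos_of_mul_pos_left ((by positivity : (0 : ℝ) < 2 * (k + 1)).trans_le
    hbound) (exp_pos _).le
  have hlog := log_le_log (by positivity) hbound
  rw [log_mul two_ne_zero (by positivity), log_mul hC0.ne' (exp_pos _).ne', log_exp] at hlog
  have hxp : x * p = p * Real.log ω⁻¹ / 2 * a k + p * Real.log 2 := by ring
  linarith

theorem pos_and_div_le_liminf_of_hasSPTBound (hω : ω ∈ Ioo 0 1) (ha0 : 0 < a 0)
    (hamono : Monotone a) {s : ℝ} (hs : 0 < s) (hb : ∀ k, s ≤ b k) {p : ℝ}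
    (h : HasSPTBound (akorobovLam ω a b) p) :
    0 < p ∧ ((2 / Real.log ω⁻¹ / p : ℝ) : EReal)
      ≤ liminf (fun k : ℕ => (a k / Real.log ((k : ℝ) + 1) : EReal)) atTop := by
  obtain ⟨B, hB⟩ := exists_log_le_of_hasSPTBound hω ha0 hamono hs hb h
  have hL : 0 < Real.log ω⁻¹ := log_inv_pos_of_mem_Ioo hω
  have hp : 0 < p := by
    by_contra hp
    obtain ⟨k, hk⟩ := (tendsto_log_natCast_add_one_atTop.eventually_gt_atTop B).exists
    have : p * Real.log ω⁻¹ / 2 * a k ≤ 0 :=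
      mul_nonpos_of_nonpos_of_nonneg (by nlinarith) (ha0.le.trans (hamono k.zero_le))
    linarith [hB k]
  refine ⟨hp, ?_⟩
  convert le_liminf_div_log (by positivity) (Eventually.of_forall hB) using 2
  field_simp

end Korobov

/-- `A_*` is computed in `EReal`; when `A_* = ∞` the right-hand side is `2 / 0 = 0`, via
`EReal.toReal ⊤ = 0`. -/
theorem akorobov_spt (ω : ℝ) (hω : ω ∈ Set.Ioo (0 : ℝ) 1) (a b : ℕ → ℝ)
    (ha0 : 0 < a 0) (hamono : Monotone a)
    (hb : ∃ bstar : ℝ, 0 < bstar ∧ ∀ k, bstar ≤ b k) :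
    (IsSPT (akorobovLam ω a b) ↔
      0 < Filter.liminf (fun k : ℕ => (a k / Real.log ((k : ℝ) + 1) : EReal))
        Filter.atTop) ∧
    (0 < Filter.liminf (fun k : ℕ => (a k / Real.log ((k : ℝ) + 1) : EReal))
        Filter.atTop →
      sptExponent (akorobovLam ω a b) =
        2 / ((Real.log ω⁻¹ : EReal) *
          Filter.liminf (fun k : ℕ => (a k / Real.log ((k : ℝ) + 1) : EReal))
            Filter.atTop).toReal) := by
  obtain ⟨s, hs, hb⟩ := hb
  have hL : 0 < Real.log ω⁻¹ := log_inv_pos_of_mem_Ioo hω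
  have key := nonempty_iff_and_sInf_eq (S := {p : ℝ | 0 ≤ p ∧ HasSPTBound (akorobovLam ω a b) p})
    (div_pos two_pos hL)
    (fun q hq hlt => ⟨hq.le, hasSPTBound_akorobovLam_of_div_lt_liminf hω ha0 hamono hs hb hq hlt⟩)
    (fun p hp => pos_and_div_le_liminf_of_hasSPTBound hω ha0 hamono hs hb hp.2)
  refine ⟨isSPT_iff_nonempty.trans key.1, fun hℓ => ?_⟩
  rw [sptExponent_eq_sInf, key.2 hℓ, EReal.toReal_mul, EReal.toReal_coe, div_div]
end
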